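/- arXiv:1411.6427 — 2 statements merged into one kernel-verified Lean document; each statement's English description precedes it below -/
import Mathlib

section
/- Let X ⊂ ℂⁿ be the zero locus of homogeneous polynomials f₁,…,fᵣ each of degree at least 2, and let m ≥ 2. If (x₁,…,x_{m-1}) is a point of the (m−2)-nd jet scheme of X and x_m ∈ ℂⁿ is arbitrary, then (0, x₁, x₂, …, x_{m-1}, x_m) is a point of the m-th jet scheme of X. In particular the fiber over 0 of the projection J_m(X) → X has dimension at least dim J_{m-2}(X) + n. -/
open Polynomial

lemma aux_homog_smul {σ R A : Type*} [CommSemiring R] [CommSemiring A] [Algebra R A]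
    {f : MvPolynomial σ R} {d : ℕ} (hf : f.IsHomogeneous d) (c : A) (g : σ → A) :
    MvPolynomial.aeval (fun j => c * g j) f = c ^ d * MvPolynomial.aeval g f := by
  rw [MvPolynomial.aeval_def, MvPolynomial.aeval_def, MvPolynomial.eval₂_eq,
    MvPolynomial.eval₂_eq, Finset.mul_sum]
  refine Finset.sum_congr rfl fun k hk => ?_
  have hdeg : ∑ i ∈ k.support, k i = d := by
    have := hf (MvPolynomial.mem_support_iff.mp hk)
    simpa [Finsupp.weight_apply, Finsupp.sum] using this
  have : ∏ i ∈ k.support, (c * g i) ^ k i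
      = c ^ d * ∏ i ∈ k.support, g i ^ k i := by
    simp_rw [mul_pow, Finset.prod_mul_distrib, Finset.prod_pow_eq_pow_sum, hdeg]
  rw [this]; ring

lemma aux_dvd_sub_aeval {σ : Type*} (f : MvPolynomial σ ℂ) (p : ℂ[X]) (a b : σ → ℂ[X])
    (h : ∀ j, p ∣ (a j - b j)) :
    p ∣ (MvPolynomial.aeval a f - MvPolynomial.aeval b f) := by
  let I : Ideal ℂ[X] := Ideal.span {p}
  have key : ∀ j, Ideal.Quotient.mk I (a j) = Ideal.Quotient.mk I (b j) := fun j => by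
    rw [Ideal.Quotient.mk_eq_mk_iff_sub_mem]
    exact Ideal.mem_span_singleton.mpr (h j)
  have : Ideal.Quotient.mk I (MvPolynomial.aeval a f)
      = Ideal.Quotient.mk I (MvPolynomial.aeval b f) := by
    rw [MvPolynomial.aeval_def, MvPolynomial.aeval_def, MvPolynomial.eval₂_comp_left,
      MvPolynomial.eval₂_comp_left]
    congr 1
    funext j; exact key j
  rw [← Ideal.mem_span_singleton, ← Ideal.Quotient.mk_eq_mk_iff_sub_mem] at *
  exact this

/-- Let `X ⊆ ℂⁿ` be the common zero locus of homogeneous polynomials `f k` each of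
degree at least 2, and let `m ≥ 2`.  If `(x₁, …, x_{m-1})` is a point of the
`(m-2)`-nd jet scheme of `X` (i.e. `f k (x₁ + x₂ t + ⋯ + x_{m-1} t^{m-2}) ≡ 0 mod t^{m-1}`
for all `k`), and `x_m ∈ ℂⁿ` is arbitrary, then `(0, x₁, x₂, …, x_{m-1}, x_m)` is a
point of the `m`-th jet scheme of `X`:
`f k (x₁ t + x₂ t² + ⋯ + x_m t^m) ≡ 0 mod t^{m+1}` for all `k`. -/
theorem stmt1 {n : ℕ} {ι : Type*} (f : ι → MvPolynomial (Fin n) ℂ)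
    (d : ι → ℕ) (hd : ∀ k, 2 ≤ d k) (hf : ∀ k, (f k).IsHomogeneous (d k))
    (m : ℕ) (hm : 2 ≤ m) (x : ℕ → Fin n → ℂ)
    (hx : ∀ k, (X : ℂ[X]) ^ (m - 1) ∣
      MvPolynomial.aeval
        (fun j => ∑ i ∈ Finset.range (m - 1), C (x (i + 1) j) * X ^ i) (f k)) :
    ∀ k, (X : ℂ[X]) ^ (m + 1) ∣
      MvPolynomial.aeval
        (fun j => ∑ i ∈ Finset.Icc 1 m, C (x i j) * X ^ i) (f k) := by
  obtain ⟨p, rfl⟩ : ∃ p, m = p + 2 := ⟨m - 2, by omega⟩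
  intro k
  set h : Fin n → ℂ[X] := fun j => ∑ i ∈ Finset.range (p + 2), C (x (i + 1) j) * X ^ i with hh
  set H : Fin n → ℂ[X] := fun j => ∑ i ∈ Finset.range (p + 1), C (x (i + 1) j) * X ^ i with hH
  have hg : (fun j => ∑ i ∈ Finset.Icc 1 (p + 2), C (x i j) * X ^ i) = fun j => X * h j := by
    funext j
    rw [← Finset.Ico_add_one_right_eq_Icc, Finset.sum_Ico_eq_sum_range, hh, Finset.mul_sum]
    refine Finset.sum_congr (by norm_num) fun i _ => ?_
    rw [add_comm 1 i, pow_succ]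
    ring
  rw [hg, aux_homog_smul (hf k)]
  have hsub : ∀ j, (X : ℂ[X]) ^ (p + 1) ∣ (h j - H j) := by
    intro j
    rw [hh, hH]
    simp only [Finset.sum_range_succ (n := p + 1), add_sub_cancel_left]
    exact Dvd.intro_left _ rfl
  have h1 : (X : ℂ[X]) ^ (p + 1) ∣ MvPolynomial.aeval h (f k) := by
    have h0 := aux_dvd_sub_aeval (f k) ((X : ℂ[X]) ^ (p + 1)) h H hsub
    have h2 : (X : ℂ[X]) ^ (p + 1) ∣ MvPolynomial.aeval H (f k) := hx k
    simpa using dvd_add h0 h2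
  obtain ⟨q, hq⟩ := h1
  rw [hq, ← mul_assoc]
  refine Dvd.dvd.mul_right ?_ q
  rw [← pow_add]
  exact pow_dvd_pow _ (by have := hd k; omega)
end

section
/- Let g = ⊕_{k ∈ ℤ} g(k) be a ℤ-graded Lie algebra over ℂ with g(k) = 0 for |k| large, and let z ∈ g(0) act as [z, y] = k y for y ∈ g(k) (grading by ad z). Let λ ∈ ℂ*, x ∈ g(0) with ad x nilpotent, and y ∈ u := ⊕_{k>0} g(k). Then there exists an element τ in the group generated by exp(ad w), w ∈ u, such that τ(λz + x + y) = λz + x. -/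
/-- The exponential of a (nilpotent) endomorphism of a finite-dimensional complex
vector space, as a finite sum `∑_{i ≤ dim} fⁱ/i!`. -/
noncomputable def expNil {L : Type*} [AddCommGroup L] [Module ℂ L]
    [FiniteDimensional ℂ L] (f : Module.End ℂ L) : Module.End ℂ L :=
  ∑ i ∈ Finset.range (Module.finrank ℂ L + 1), ((i.factorial : ℂ)⁻¹) • f ^ i

/-- Let `g = ⊕_{k ∈ ℤ} g(k)` be a finite-dimensional `ℤ`-graded complex Lie algebra
(the grading being bounded and given by the eigenvalues of `ad z` for
`z ∈ g(0)`), let `λ ∈ ℂ*`, let `x ∈ g(0)` with `ad x` nilpotent, and let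
`y ∈ u = ⊕_{k>0} g(k)`.  Then some element `τ` of the monoid generated by the
automorphisms `exp(ad w)`, `w ∈ u`, satisfies `τ(λz + x + y) = λz + x`. -/
theorem stmt15 {L : Type*} [LieRing L] [LieAlgebra ℂ L] [FiniteDimensional ℂ L]
    (G : ℤ → Submodule ℂ L)
    (hdsum : DirectSum.IsInternal G)
    (hbound : ∃ N : ℕ, ∀ k : ℤ, (N : ℤ) < |k| → G k = ⊥)
    (hbrack : ∀ k l : ℤ, ∀ a ∈ G k, ∀ b ∈ G l, ⁅a, b⁆ ∈ G (k + l))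
    (z : L) (hz : z ∈ G 0) (hzgrad : ∀ (k : ℤ), ∀ y ∈ G k, ⁅z, y⁆ = k • y)
    (lam : ℂ) (hlam : lam ≠ 0) (x : L) (hx : x ∈ G 0)
    (hxnil : IsNilpotent (LieAlgebra.ad ℂ L x))
    (y : L) (hy : y ∈ ⨆ k ∈ {k : ℤ | 0 < k}, G k) :
    ∃ τ ∈ Submonoid.closure {g : Module.End ℂ L |
        ∃ w ∈ ⨆ k ∈ {k : ℤ | 0 < k}, G k, g = expNil (LieAlgebra.ad ℂ L w)},
      τ (lam • z + x + y) = lam • z + x := by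
  rcases subsingleton_or_nontrivial L with hL | hL
  · exact ⟨1, Submonoid.one_mem _, Subsingleton.elim _ _⟩
  obtain ⟨N, hN⟩ := hbound
  obtain ⟨M, hM⟩ := hxnil
  set S : Set (Module.End ℂ L) := {g : Module.End ℂ L |
      ∃ w ∈ ⨆ k ∈ {k : ℤ | 0 < k}, G k, g = expNil (LieAlgebra.ad ℂ L w)} with hS
  -- the filtration
  set U : ℤ → Submodule ℂ L := fun p => ⨆ k ∈ {k : ℤ | p ≤ k}, G k with hU
  have hUmem : ∀ p k : ℤ, p ≤ k → G k ≤ U p := by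
    intro p k h
    exact le_iSup₂ (f := fun k (_ : k ∈ {k : ℤ | p ≤ k}) => G k) k h
  have hUanti : ∀ p q : ℤ, p ≤ q → U q ≤ U p := by
    intro p q h
    exact iSup₂_le fun k hk => hUmem p k (h.trans hk)
  have hUsup : ∀ p : ℤ, U p = G p ⊔ U (p + 1) := by
    intro p
    refine le_antisymm (iSup₂_le fun k hk => ?_)
      (sup_le (hUmem p p le_rfl) (hUanti p (p + 1) (by omega)))
    rcases eq_or_ne k p with rfl | h
    · exact le_sup_left
    · exact (hUmem (p + 1) k (by simp only [Set.mem_setOf_eq] at hk; omega)).trans le_sup_right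
  have hUbot : ∀ p : ℤ, (N : ℤ) < p → U p = ⊥ := by
    intro p hp
    refine le_bot_iff.mp (iSup₂_le fun k hk => ?_)
    simp only [Set.mem_setOf_eq] at hk
    rw [hN k (lt_of_lt_of_le (by omega) (le_abs_self k))]
  -- bracket with a pure element
  have hbU : ∀ (j : ℤ) (a : L), a ∈ G j → ∀ (p : ℤ) (b : L), b ∈ U p → ⁅a, b⁆ ∈ U (j + p) := by
    intro j a ha p b hb
    have hb2 : b ∈ ⨆ k, ⨆ _ : k ∈ {k : ℤ | p ≤ k}, G k := hb
    rw [iSup_subtype'] at hb2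
    refine Submodule.iSup_induction _ (motive := fun b => ⁅a, b⁆ ∈ U (j + p)) hb2 ?_ ?_ ?_
    · rintro ⟨k, hk⟩ c hc
      exact hUmem (j + p) (j + k) (by simp only [Set.mem_setOf_eq] at hk; omega)
        (hbrack j k a ha c hc)
    · simp
    · intro c d hc hd
      rw [lie_add]
      exact add_mem hc hd
  -- the key computation: one exponential step
  have hrank : 1 ≤ Module.finrank ℂ L := Module.finrank_pos
  have hstep : ∀ p : ℤ, 1 ≤ p → ∀ a ∈ G p, ∀ b ∈ U (p + 1),
      ∃ r ∈ U (p + 1),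
        expNil (LieAlgebra.ad ℂ L ((lam * p)⁻¹ • a)) (lam • z + x + (a + b)) =
          lam • z + x + (⁅(lam * (p : ℂ))⁻¹ • a, x⁆ + r) := by
    intro p hp a ha b hb
    have hlp : (lam * (p : ℂ)) ≠ 0 := by
      refine mul_ne_zero hlam ?_
      exact_mod_cast (by omega : p ≠ 0)
    set c : ℂ := (lam * (p : ℂ))⁻¹ with hc
    set w : L := c • a with hwdef
    have hw : w ∈ G p := Submodule.smul_mem _ _ ha
    set f : Module.End ℂ L := LieAlgebra.ad ℂ L w with hf
    set v : L := lam • z + x + (a + b) with hv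
    have hfapp : ∀ u : L, f u = ⁅w, u⁆ := fun u => rfl
    -- f v
    have hwz : lam • ⁅w, z⁆ = -a := by
      have h1 : ⁅w, z⁆ = -((p : ℂ) • w) := by
        rw [← lie_skew, hzgrad p w hw, Int.cast_smul_eq_zsmul]
      rw [h1, smul_neg, hwdef, smul_smul, smul_smul, hc, mul_inv_cancel₀ hlp, one_smul]
    have hfv : f v = -a + (⁅w, x⁆ + (⁅w, a⁆ + ⁅w, b⁆)) := by
      rw [hfapp, hv]
      rw [lie_add, lie_add, lie_add, lie_smul]
      rw [hwz]
      abel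
    have hwx : ⁅w, x⁆ ∈ G p := by
      have := hbrack p 0 w hw x hx
      rwa [add_zero] at this
    have hwa : ⁅w, a⁆ ∈ U (p + 1) := hUmem _ (p + p) (by omega) (hbrack p p w hw a ha)
    have hwb : ⁅w, b⁆ ∈ U (p + 1) := hUanti _ (p + (p + 1)) (by omega) (hbU p w hw (p + 1) b hb)
    have hfv_mem : f v ∈ U p := by
      rw [hfv]
      refine add_mem (neg_mem (hUmem p p le_rfl ha)) (add_mem (hUmem p p le_rfl hwx) ?_)
      exact hUanti p (p + 1) (by omega) (add_mem hwa hwb)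
    have hmap1 : ∀ u ∈ U p, f u ∈ U (p + 1) := by
      intro u hu
      exact hUanti _ (p + p) (by omega) (hbU p w hw p u hu)
    have hmap2 : ∀ u ∈ U (p + 1), f u ∈ U (p + 1) := by
      intro u hu
      exact hUanti _ (p + (p + 1)) (by omega) (hbU p w hw (p + 1) u hu)
    have hpow : ∀ i : ℕ, (f ^ (i + 2)) v ∈ U (p + 1) := by
      intro i
      induction i with
      | zero =>
        rw [pow_succ, Module.End.mul_apply, pow_one]
        exact hmap1 _ hfv_mem
      | succ n ih =>
        rw [show n + 1 + 2 = (n + 2) + 1 by omega, pow_succ', Module.End.mul_apply]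
        exact hmap2 _ ih
    -- expand the exponential
    obtain ⟨m, hm⟩ : ∃ m, Module.finrank ℂ L = m + 1 := ⟨Module.finrank ℂ L - 1, by omega⟩
    have hexp : expNil f v =
        (∑ i ∈ Finset.range m, (((i + 1 + 1).factorial : ℂ)⁻¹) • (f ^ (i + 1 + 1)) v)
          + f v + v := by
      simp only [expNil]
      rw [hm, LinearMap.sum_apply, Finset.sum_range_succ', Finset.sum_range_succ']
      simp only [LinearMap.smul_apply, zero_add, pow_zero, pow_one, Module.End.one_apply,
        Nat.factorial_zero, Nat.factorial_one, Nat.cast_one, inv_one, one_smul]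
    set s : L := ∑ i ∈ Finset.range m, (((i + 1 + 1).factorial : ℂ)⁻¹) • (f ^ (i + 1 + 1)) v
      with hs
    have hsmem : s ∈ U (p + 1) := by
      refine Submodule.sum_mem _ fun i _ => Submodule.smul_mem _ _ ?_
      have := hpow i
      rwa [show i + 2 = i + 1 + 1 by omega] at this
    refine ⟨⁅w, a⁆ + ⁅w, b⁆ + b + s, add_mem (add_mem (add_mem hwa hwb)
      (hUanti _ (p + 1) le_rfl hb)) hsmem, ?_⟩
    rw [hexp, hfv, hv]
    abel
  -- the inner induction (killing the lowest component, by ad-x-nilpotency degree)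
  have hQ : ∀ m : ℕ, ∀ p : ℤ, 1 ≤ p →
      (∀ b ∈ U (p + 1), ∃ τ ∈ Submonoid.closure S, τ (lam • z + x + b) = lam • z + x) →
      ∀ a ∈ G p, ((LieAlgebra.ad ℂ L x) ^ m) a = 0 → ∀ b ∈ U (p + 1),
        ∃ τ ∈ Submonoid.closure S, τ (lam • z + x + (a + b)) = lam • z + x := by
    intro m
    induction m with
    | zero =>
      intro p hp hnext a ha ha0 b hb
      rw [pow_zero, Module.End.one_apply] at ha0
      rw [ha0, zero_add]
      exact hnext b hb
    | succ n ih =>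
      intro p hp hnext a ha ha0 b hb
      obtain ⟨r, hr, heq⟩ := hstep p hp a ha b hb
      set c : ℂ := (lam * (p : ℂ))⁻¹ with hc
      set w : L := c • a with hwdef
      have hw : w ∈ G p := Submodule.smul_mem _ _ ha
      have hwx : ⁅w, x⁆ ∈ G p := by
        have := hbrack p 0 w hw x hx
        rwa [add_zero] at this
      have hwx0 : ((LieAlgebra.ad ℂ L x) ^ n) ⁅w, x⁆ = 0 := by
        have h1 : ⁅w, x⁆ = -(c • (LieAlgebra.ad ℂ L x) a) := by
          rw [← lie_skew]
          rw [hwdef, lie_smul]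
          rfl
        rw [h1, map_neg, map_smul]
        have h2 : ((LieAlgebra.ad ℂ L x) ^ n) ((LieAlgebra.ad ℂ L x) a) =
            ((LieAlgebra.ad ℂ L x) ^ (n + 1)) a := by
          rw [pow_succ, Module.End.mul_apply]
        rw [h2, ha0, smul_zero, neg_zero]
      obtain ⟨τ', hτ'mem, hτ'eq⟩ := ih p hp hnext ⁅w, x⁆ hwx hwx0 r hr
      have hwu : w ∈ ⨆ k ∈ {k : ℤ | 0 < k}, G k :=
        le_iSup₂ (f := fun k (_ : k ∈ {k : ℤ | 0 < k}) => G k) p (by omega : (0:ℤ) < p) hw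
      have hemem : expNil (LieAlgebra.ad ℂ L w) ∈ Submonoid.closure S :=
        Submonoid.subset_closure ⟨w, hwu, rfl⟩
      refine ⟨τ' * expNil (LieAlgebra.ad ℂ L w), mul_mem hτ'mem hemem, ?_⟩
      rw [Module.End.mul_apply, heq, hτ'eq]
  -- the outer (descending degree) induction
  have hP : ∀ d : ℕ, ∀ p : ℤ, (N : ℤ) < p + d → 1 ≤ p → ∀ y' ∈ U p,
      ∃ τ ∈ Submonoid.closure S, τ (lam • z + x + y') = lam • z + x := by
    intro d
    induction d with
    | zero =>
      intro p hpd hp y' hy'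
      rw [hUbot p (by omega)] at hy'
      rw [Submodule.mem_bot] at hy'
      rw [hy', add_zero]
      exact ⟨1, Submonoid.one_mem _, rfl⟩
    | succ d ih =>
      intro p hpd hp y' hy'
      rw [hUsup p] at hy'
      obtain ⟨a, ha, b, hb, rfl⟩ := Submodule.mem_sup.mp hy'
      refine hQ M p hp (fun b' hb' => ih (p + 1) (by omega) (by omega) b' hb') a ha ?_ b hb
      rw [hM]
      rfl
  have hle : (⨆ k ∈ {k : ℤ | 0 < k}, G k) ≤ U 1 :=
    iSup₂_le fun k hk => hUmem 1 k (by simp only [Set.mem_setOf_eq] at hk; omega)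
  exact hP N 1 (by omega) le_rfl y (hle hy)
end
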